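/- For all real numbers h1, h2, P with 0 < h1 ≤ h2 and P > 0, and every ρ ∈ [0, 1), setting N(ρ) := h1 + h2 − 2ρ·√(h1·h2), the quantity h_{12,P}(ρ) := N(ρ)/(1 − ρ² + P·N(ρ)) satisfies h_{12,P}(ρ) ≥ h2/(1 + h2·P). Moreover, if h1 < h2, equality holds if and only if ρ = √(h1/h2). -/

import Mathlib

/-!
Writing `N(ρ) = h1 + h2 − 2ρ√(h1h2)`, the reciprocal of `h_{12,P}(ρ)` is `(1 − ρ²)/N(ρ) + P`, so the
bound is equivalent to `h2 (1 − ρ²) ≤ N(ρ)`, and the two sides differ by the perfect square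
`(√h1 − ρ√h2)²`. Equality therefore holds exactly when `ρ√h2 = √h1`.
-/

open Real

theorem div_one_add_mul_le_div_add_mul_iff {c N D P : ℝ} (hc : 0 < 1 + c * P)
    (hD : 0 < D + P * N) : c / (1 + c * P) ≤ N / (D + P * N) ↔ c * D ≤ N := by
  rw [div_le_div_iff₀ hc hD]
  constructor <;> intro h <;> linarith

theorem div_add_mul_eq_div_one_add_mul_iff {c N D P : ℝ} (hc : 0 < 1 + c * P)
    (hD : 0 < D + P * N) : N / (D + P * N) = c / (1 + c * P) ↔ c * D = N := by
  rw [div_eq_div_iff hD.ne' hc.ne']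
  constructor <;> intro h <;> linarith

section Correlation

variable {h1 h2 ρ : ℝ}

theorem add_sub_two_mul_sqrt_mul_sub_eq_sq (hh1 : 0 ≤ h1) (hh2 : 0 ≤ h2) :
    h1 + h2 - 2 * ρ * √(h1 * h2) - h2 * (1 - ρ ^ 2) = (√h1 - ρ * √h2) ^ 2 := by
  rw [sqrt_mul hh1, ← sq_sqrt hh1, ← sq_sqrt hh2, sqrt_sq (sqrt_nonneg _),
    sqrt_sq (sqrt_nonneg _)]
  ring

theorem add_sub_two_mul_sqrt_mul_pos (hh1 : 0 < h1) (hh2 : 0 < h2) (hρ : ρ < 1) :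
    0 < h1 + h2 - 2 * ρ * √(h1 * h2) := by
  have hs : 0 < √(h1 * h2) := sqrt_pos.2 (mul_pos hh1 hh2)
  have hamgm : 2 * √(h1 * h2) ≤ h1 + h2 := by
    rw [sqrt_mul hh1.le]
    nlinarith [sq_nonneg (√h1 - √h2), sq_sqrt hh1.le, sq_sqrt hh2.le]
  nlinarith

theorem sqrt_sub_mul_sqrt_sq_eq_zero_iff (hh2 : 0 < h2) :
    (√h1 - ρ * √h2) ^ 2 = 0 ↔ ρ = √(h1 / h2) := by
  have hb : √h2 ≠ 0 := (sqrt_pos.2 hh2).ne'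
  rw [sqrt_div' h1 hh2.le, pow_eq_zero_iff two_ne_zero, sub_eq_zero, eq_div_iff hb, eq_comm]

end Correlation

theorem sato_h12P_min (h1 h2 P : ℝ) (hh1 : 0 < h1) (h12 : h1 ≤ h2) (hP : 0 < P) :
    ∀ ρ : ℝ, 0 ≤ ρ → ρ < 1 →
      h2 / (1 + h2 * P) ≤
        (h1 + h2 - 2 * ρ * Real.sqrt (h1 * h2)) /
          (1 - ρ ^ 2 + P * (h1 + h2 - 2 * ρ * Real.sqrt (h1 * h2))) ∧
      (h1 < h2 →
        ((h1 + h2 - 2 * ρ * Real.sqrt (h1 * h2)) /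
            (1 - ρ ^ 2 + P * (h1 + h2 - 2 * ρ * Real.sqrt (h1 * h2))) =
          h2 / (1 + h2 * P) ↔ ρ = Real.sqrt (h1 / h2))) := by
  intro ρ hρ0 hρ1
  have hh2 : 0 < h2 := hh1.trans_le h12
  have hN := add_sub_two_mul_sqrt_mul_pos hh1 hh2 hρ1
  have hc : 0 < 1 + h2 * P := by positivity
  have hD : 0 < 1 - ρ ^ 2 + P * (h1 + h2 - 2 * ρ * √(h1 * h2)) := by nlinarith [mul_pos hP hN]
  have hgap := add_sub_two_mul_sqrt_mul_sub_eq_sq (ρ := ρ) hh1.le hh2.le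
  refine ⟨(div_one_add_mul_le_div_add_mul_iff hc hD).2 ?_, fun _ => ?_⟩
  · linarith [sq_nonneg (√h1 - ρ * √h2)]
  · rw [div_add_mul_eq_div_one_add_mul_iff hc hD, ← sqrt_sub_mul_sqrt_sq_eq_zero_iff hh2, ← hgap]
    constructor <;> intro h <;> linarith
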